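/- For every configuration x ∈ (ℰ ∪ ℰ_F)^{2B}, every connected component of the strand graph G_x contains either exactly 0 or exactly 2 boundary vertices (vertices of the form (i,0) or (i,2B)); i.e., the components are closed loops not touching the boundary or open strands with exactly two boundary endpoints. -/

import Mathlib

open SimpleGraph

variable {V : Type*}

/-- The relation generating the strand graph of a configuration `x` of `n` local
operators (each operator is a finite set of sites: an AFM edge in `E`, an FM edge
in `EF`, or a singleton vertex operator). -/
def strandRel (E EF : Finset (Finset V)) (n : ℕ) (x : Fin n → Finset V)
    (p q : V × Fin (n + 1)) : Prop :=
  ∃ t : Fin n,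
    -- temporal edge at a site the operator does not act on
    (p.1 = q.1 ∧ p.1 ∉ x t ∧ p.2 = Fin.castSucc t ∧ q.2 = Fin.succ t) ∨
    -- bridge edges of an antiferromagnetic operator
    (x t ∈ E ∧ p.1 ∈ x t ∧ q.1 ∈ x t ∧ p.1 ≠ q.1 ∧
      ((p.2 = Fin.castSucc t ∧ q.2 = Fin.castSucc t) ∨
       (p.2 = Fin.succ t ∧ q.2 = Fin.succ t))) ∨
    -- crossing edges of a ferromagnetic operator
    (x t ∈ EF ∧ p.1 ∈ x t ∧ q.1 ∈ x t ∧ p.1 ≠ q.1 ∧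
      p.2 = Fin.castSucc t ∧ q.2 = Fin.succ t)

/-- The strand graph of a configuration. -/
def strandGraph (E EF : Finset (Finset V)) (n : ℕ) (x : Fin n → Finset V) :
    SimpleGraph (V × Fin (n + 1)) :=
  SimpleGraph.fromRel (strandRel E EF n x)

/-- `L(x)`: the number of loops (connected components of the strand graph). -/
noncomputable def numLoops (E EF : Finset (Finset V)) (n : ℕ) (x : Fin n → Finset V) : ℕ :=
  Nat.card (strandGraph E EF n x).ConnectedComponent

namespace StrandAux

variable {V : Type*} [DecidableEq V]

/-- the other element of a 2-element finset -/
noncomputable def partner (e : Finset V) (i : V) : V :=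
  if h : (e.erase i).Nonempty then h.choose else i

lemma erase_nonempty {e : Finset V} {i : V} (hc : e.card = 2) (hi : i ∈ e) :
    (e.erase i).Nonempty := by
  rw [← Finset.card_pos, Finset.card_erase_of_mem hi, hc]; norm_num

lemma partner_mem {e : Finset V} {i : V} (hc : e.card = 2) (hi : i ∈ e) :
    partner e i ∈ e ∧ partner e i ≠ i := by
  have h := erase_nonempty hc hi
  have hs := h.choose_spec
  rw [Finset.mem_erase] at hs
  rw [partner, dif_pos h]
  exact ⟨hs.2, hs.1⟩

lemma partner_uniq {e : Finset V} {i j : V} (hc : e.card = 2) (hi : i ∈ e)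
    (hj : j ∈ e) (hne : j ≠ i) : j = partner e i := by
  have h := erase_nonempty hc hi
  have hs := h.choose_spec
  rw [partner, dif_pos h]
  have hj' : j ∈ e.erase i := Finset.mem_erase.2 ⟨hne, hj⟩
  have hcard : (e.erase i).card ≤ 1 := by
    rw [Finset.card_erase_of_mem hi, hc]
  exact Finset.card_le_one.1 hcard j hj' _ hs

variable (E : Finset (Finset V)) {n : ℕ} (x : Fin n → Finset V)

noncomputable def fstep (v : V × Fin (n + 1)) (h : v.2 ≠ Fin.last n) : V × Fin (n + 1) :=
  if v.1 ∈ x (v.2.castPred h) then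
    if x (v.2.castPred h) ∈ E then (partner (x (v.2.castPred h)) v.1, v.2)
    else (partner (x (v.2.castPred h)) v.1, (v.2.castPred h).succ)
  else (v.1, (v.2.castPred h).succ)

noncomputable def pstep (v : V × Fin (n + 1)) (h : v.2 ≠ 0) : V × Fin (n + 1) :=
  if v.1 ∈ x (v.2.pred h) then
    if x (v.2.pred h) ∈ E then (partner (x (v.2.pred h)) v.1, v.2)
    else (partner (x (v.2.pred h)) v.1, (v.2.pred h).castSucc)
  else (v.1, (v.2.pred h).castSucc)

lemma last_ne_zero' (hn : n ≠ 0) : (Fin.last n : Fin (n + 1)) ≠ 0 := by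
  intro h
  exact hn (by simpa [Fin.ext_iff] using h)

noncomputable def ff (hn : n ≠ 0) (v : V × Fin (n + 1)) : V × Fin (n + 1) :=
  if h : v.2 = Fin.last n then pstep E x v (by rw [h]; exact last_ne_zero' hn)
  else fstep E x v h

noncomputable def gg (hn : n ≠ 0) (v : V × Fin (n + 1)) : V × Fin (n + 1) :=
  if h : v.2 = 0 then fstep E x v (by rw [h]; exact (last_ne_zero' hn).symm)
  else pstep E x v h

end StrandAux

namespace StrandAux

variable {V : Type*} [DecidableEq V] {E EF : Finset (Finset V)} {n : ℕ} {x : Fin n → Finset V}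

section Adj

variable (hE : ∀ e ∈ E, e.card = 2) (hEF : ∀ e ∈ EF, e.card = 2)
    (hdisj : Disjoint E EF) (hx : ∀ t, x t ∈ E ∪ EF)

include hE hEF hx in
lemma hcard (t : Fin n) : (x t).card = 2 := by
  rcases Finset.mem_union.1 (hx t) with h | h
  · exact hE _ h
  · exact hEF _ h

include hE hEF hdisj hx in
lemma adj_fstep (v : V × Fin (n + 1)) (h : v.2 ≠ Fin.last n) :
    (strandGraph E EF n x).Adj v (fstep E x v h) := by
  set t := v.2.castPred h with ht'
  have ht : Fin.castSucc t = v.2 := Fin.castSucc_castPred _ _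
  have hc2 := hcard hE hEF hx t
  rw [strandGraph, fromRel_adj]
  by_cases hv : v.1 ∈ x t
  · by_cases hxe : x t ∈ E
    · have hpm := partner_mem hc2 hv
      rw [fstep, if_pos hv, if_pos hxe]
      refine ⟨fun hcon => hpm.2 (congrArg Prod.fst hcon).symm, Or.inl ⟨t, Or.inr (Or.inl
        ⟨hxe, hv, hpm.1, fun hcon => hpm.2 hcon.symm, Or.inl ⟨ht.symm, ht.symm⟩⟩)⟩⟩
    · have hxf : x t ∈ EF := by
        rcases Finset.mem_union.1 (hx t) with h' | h'
        · exact absurd h' hxe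
        · exact h'
      have hpm := partner_mem hc2 hv
      rw [fstep, if_pos hv, if_neg hxe]
      refine ⟨fun hcon => ?_, Or.inl ⟨t, Or.inr (Or.inr
        ⟨hxf, hv, hpm.1, fun hcon => hpm.2 hcon.symm, ht.symm, rfl⟩)⟩⟩
      · have := congrArg Prod.snd hcon
        simp only at this
        exact (Fin.castSucc_lt_succ : Fin.castSucc t < Fin.succ t).ne (ht.trans this)
  · rw [fstep, if_neg hv]
    refine ⟨fun hcon => ?_, Or.inl ⟨t, Or.inl ⟨rfl, hv, ht.symm, rfl⟩⟩⟩
    · have := congrArg Prod.snd hcon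
      simp only at this
      exact (Fin.castSucc_lt_succ : Fin.castSucc t < Fin.succ t).ne (ht.trans this)

include hE hEF hdisj hx in
lemma adj_pstep (v : V × Fin (n + 1)) (h : v.2 ≠ 0) :
    (strandGraph E EF n x).Adj v (pstep E x v h) := by
  set t := v.2.pred h with ht'
  have ht : Fin.succ t = v.2 := Fin.succ_pred _ _
  have hc2 := hcard hE hEF hx t
  rw [strandGraph, fromRel_adj]
  by_cases hv : v.1 ∈ x t
  · by_cases hxe : x t ∈ E
    · have hpm := partner_mem hc2 hv
      rw [pstep, if_pos hv, if_pos hxe]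
      refine ⟨fun hcon => hpm.2 (congrArg Prod.fst hcon).symm, Or.inl ⟨t, Or.inr (Or.inl
        ⟨hxe, hv, hpm.1, fun hcon => hpm.2 hcon.symm, Or.inr ⟨ht.symm, ht.symm⟩⟩)⟩⟩
    · have hxf : x t ∈ EF := by
        rcases Finset.mem_union.1 (hx t) with h' | h'
        · exact absurd h' hxe
        · exact h'
      have hpm := partner_mem hc2 hv
      rw [pstep, if_pos hv, if_neg hxe]
      refine ⟨fun hcon => ?_, Or.inr ⟨t, Or.inr (Or.inr
        ⟨hxf, hpm.1, hv, hpm.2, rfl, ht.symm⟩)⟩⟩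
      · have := congrArg Prod.snd hcon
        simp only at this
        exact (Fin.castSucc_lt_succ : Fin.castSucc t < Fin.succ t).ne (this ▸ ht).symm
  · rw [pstep, if_neg hv]
    refine ⟨fun hcon => ?_, Or.inr ⟨t, Or.inl ⟨rfl, hv, rfl, ht.symm⟩⟩⟩
    · have := congrArg Prod.snd hcon
      simp only at this
      exact (Fin.castSucc_lt_succ : Fin.castSucc t < Fin.succ t).ne (this ▸ ht).symm

end Adj

end StrandAux

namespace StrandAux

section Char

variable {V : Type*} [DecidableEq V] {E EF : Finset (Finset V)} {n : ℕ} {x : Fin n → Finset V}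
variable (hE : ∀ e ∈ E, e.card = 2) (hEF : ∀ e ∈ EF, e.card = 2)
    (hdisj : Disjoint E EF) (hx : ∀ t, x t ∈ E ∪ EF) (hn : n ≠ 0)

lemma castPred_of_eq {s : Fin (n+1)} {t : Fin n} (h : s = Fin.castSucc t) :
    ∃ hne : s ≠ Fin.last n, s.castPred hne = t := by
  subst h
  exact ⟨(Fin.castSucc_lt_last t).ne, Fin.castPred_castSucc _⟩

lemma pred_of_eq {s : Fin (n+1)} {t : Fin n} (h : s = Fin.succ t) :
    ∃ hne : s ≠ 0, s.pred hne = t := by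
  subst h
  exact ⟨Fin.succ_ne_zero t, Fin.pred_succ _⟩

include hE hEF hdisj hx hn in
lemma adj_char {v w : V × Fin (n + 1)} (hadj : (strandGraph E EF n x).Adj v w) :
    w = ff E x hn v ∨ w = gg E x hn v := by
  rw [strandGraph, fromRel_adj] at hadj
  obtain ⟨hne, hR | hR⟩ := hadj <;> obtain ⟨t, hcase⟩ := hR
  · -- R v w
    rcases hcase with ⟨h1, h2, hv2, hw2⟩ | ⟨hxe, hm, hm', hne1, htimes⟩ |
      ⟨hxf, hm, hm', hne1, hv2, hw2⟩
    · -- temporal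
      left
      obtain ⟨hnl, hcp⟩ := castPred_of_eq hv2
      rw [ff, dif_neg hnl, fstep, hcp, if_neg h2]
      exact Prod.ext h1.symm hw2
    · rcases htimes with ⟨hv2, hw2⟩ | ⟨hv2, hw2⟩
      · -- bridge, lower
        left
        obtain ⟨hnl, hcp⟩ := castPred_of_eq hv2
        rw [ff, dif_neg hnl, fstep, hcp, if_pos hm, if_pos hxe]
        exact Prod.ext (partner_uniq (hcard hE hEF hx t) hm hm'
          (fun hc => hne1 hc.symm)) (hw2.trans hv2.symm)
      · -- bridge, upper
        right
        obtain ⟨hnz, hcp⟩ := pred_of_eq hv2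
        rw [gg, dif_neg hnz, pstep, hcp, if_pos hm, if_pos hxe]
        exact Prod.ext (partner_uniq (hcard hE hEF hx t) hm hm'
          (fun hc => hne1 hc.symm)) (hw2.trans hv2.symm)
    · -- crossing
      left
      obtain ⟨hnl, hcp⟩ := castPred_of_eq hv2
      have hxe : x t ∉ E := fun hmem => (Finset.disjoint_left.mp hdisj hmem) hxf
      rw [ff, dif_neg hnl, fstep, hcp, if_pos hm, if_neg hxe]
      exact Prod.ext (partner_uniq (hcard hE hEF hx t) hm hm'
        (fun hc => hne1 hc.symm)) hw2
  · -- R w v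
    rcases hcase with ⟨h1, h2, hw2, hv2⟩ | ⟨hxe, hm', hm, hne1, htimes⟩ |
      ⟨hxf, hm', hm, hne1, hw2, hv2⟩
    · -- temporal
      right
      obtain ⟨hnz, hcp⟩ := pred_of_eq hv2
      have h2' : v.1 ∉ x t := h1 ▸ h2
      rw [gg, dif_neg hnz, pstep, hcp, if_neg h2']
      exact Prod.ext h1 hw2
    · rcases htimes with ⟨hw2, hv2⟩ | ⟨hw2, hv2⟩
      · -- bridge, lower
        left
        obtain ⟨hnl, hcp⟩ := castPred_of_eq hv2
        rw [ff, dif_neg hnl, fstep, hcp, if_pos hm, if_pos hxe]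
        exact Prod.ext (partner_uniq (hcard hE hEF hx t) hm hm' hne1)
          (hw2.trans hv2.symm)
      · -- bridge, upper
        right
        obtain ⟨hnz, hcp⟩ := pred_of_eq hv2
        rw [gg, dif_neg hnz, pstep, hcp, if_pos hm, if_pos hxe]
        exact Prod.ext (partner_uniq (hcard hE hEF hx t) hm hm' hne1)
          (hw2.trans hv2.symm)
    · -- crossing
      right
      obtain ⟨hnz, hcp⟩ := pred_of_eq hv2
      have hxe : x t ∉ E := fun hmem => (Finset.disjoint_left.mp hdisj hmem) hxf
      rw [gg, dif_neg hnz, pstep, hcp, if_pos hm, if_neg hxe]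
      exact Prod.ext (partner_uniq (hcard hE hEF hx t) hm hm' hne1) hw2

end Char

end StrandAux

namespace StrandAux

section Coll

variable {V : Type*} [DecidableEq V] {E EF : Finset (Finset V)} {n : ℕ} {x : Fin n → Finset V}
variable (hE : ∀ e ∈ E, e.card = 2) (hEF : ∀ e ∈ EF, e.card = 2)
    (hdisj : Disjoint E EF) (hx : ∀ t, x t ∈ E ∪ EF) (hn : n ≠ 0)

lemma ff_eq (v : V × Fin (n+1)) (h : v.2 ≠ Fin.last n) :
    ff E x hn v = fstep E x v h := dif_neg h

lemma ff_eq' (v : V × Fin (n+1)) (h : v.2 = Fin.last n) :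
    ff E x hn v = pstep E x v (by rw [h]; exact last_ne_zero' hn) := dif_pos h

lemma gg_eq (v : V × Fin (n+1)) (h : v.2 ≠ 0) :
    gg E x hn v = pstep E x v h := dif_neg h

lemma gg_eq' (v : V × Fin (n+1)) (h : v.2 = 0) :
    gg E x hn v = fstep E x v (by rw [h]; exact (last_ne_zero' hn).symm) := dif_pos h

lemma fstep_of_mem_E (v : V × Fin (n+1)) (h : v.2 ≠ Fin.last n)
    (hm : v.1 ∈ x (v.2.castPred h)) (he : x (v.2.castPred h) ∈ E) :
    fstep E x v h = (partner (x (v.2.castPred h)) v.1, v.2) := by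
  rw [fstep, if_pos hm, if_pos he]

lemma fstep_of_mem_notE (v : V × Fin (n+1)) (h : v.2 ≠ Fin.last n)
    (hm : v.1 ∈ x (v.2.castPred h)) (he : x (v.2.castPred h) ∉ E) :
    fstep E x v h = (partner (x (v.2.castPred h)) v.1, (v.2.castPred h).succ) := by
  rw [fstep, if_pos hm, if_neg he]

lemma fstep_of_not_mem (v : V × Fin (n+1)) (h : v.2 ≠ Fin.last n)
    (hm : v.1 ∉ x (v.2.castPred h)) :
    fstep E x v h = (v.1, (v.2.castPred h).succ) := by
  rw [fstep, if_neg hm]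

lemma pstep_of_mem_E (v : V × Fin (n+1)) (h : v.2 ≠ 0)
    (hm : v.1 ∈ x (v.2.pred h)) (he : x (v.2.pred h) ∈ E) :
    pstep E x v h = (partner (x (v.2.pred h)) v.1, v.2) := by
  rw [pstep, if_pos hm, if_pos he]

lemma pstep_of_mem_notE (v : V × Fin (n+1)) (h : v.2 ≠ 0)
    (hm : v.1 ∈ x (v.2.pred h)) (he : x (v.2.pred h) ∉ E) :
    pstep E x v h = (partner (x (v.2.pred h)) v.1, (v.2.pred h).castSucc) := by
  rw [pstep, if_pos hm, if_neg he]

lemma pstep_of_not_mem (v : V × Fin (n+1)) (h : v.2 ≠ 0)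
    (hm : v.1 ∉ x (v.2.pred h)) :
    pstep E x v h = (v.1, (v.2.pred h).castSucc) := by
  rw [pstep, if_neg hm]

lemma boundary_ff_eq_gg (v : V × Fin (n+1))
    (h : v.2 = 0 ∨ v.2 = Fin.last n) : ff E x hn v = gg E x hn v := by
  rcases h with h | h
  · have hl : v.2 ≠ Fin.last n := by rw [h]; exact (last_ne_zero' hn).symm
    rw [ff_eq hn v hl, gg_eq' hn v h]
  · have hz : v.2 ≠ 0 := by rw [h]; exact last_ne_zero' hn
    rw [ff_eq' hn v h, gg_eq hn v hz]

include hE hEF hx in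
lemma collapse (v : V × Fin (n+1)) (hv0 : v.2 ≠ 0) (hvl : v.2 ≠ Fin.last n)
    (heq : ff E x hn v = gg E x hn v) :
    ff E x hn (ff E x hn v) = v ∧ gg E x hn (ff E x hn v) = v ∧
      ¬((ff E x hn v).2 = 0 ∨ (ff E x hn v).2 = Fin.last n) := by
  have hffv : ff E x hn v = fstep E x v hvl := ff_eq hn v hvl
  have hggv : gg E x hn v = pstep E x v hv0 := gg_eq hn v hv0
  have ht1 : ((v.2.castPred hvl : Fin n) : ℕ) = (v.2 : ℕ) := by simp
  have ht2 : ((v.2.pred hv0 : Fin n) : ℕ) + 1 = (v.2 : ℕ) := by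
    have : (v.2 : ℕ) ≠ 0 := fun h => hv0 (Fin.ext (by simp [h]))
    simp [Fin.coe_pred]
    omega
  have hc1 := hcard hE hEF hx (v.2.castPred hvl)
  have hc2 := hcard hE hEF hx (v.2.pred hv0)
  -- show both steps are in the E-bridge branch
  have key : v.1 ∈ x (v.2.castPred hvl) ∧ x (v.2.castPred hvl) ∈ E ∧
      v.1 ∈ x (v.2.pred hv0) ∧ x (v.2.pred hv0) ∈ E := by
    rw [hffv, hggv] at heq
    have hsnd := congrArg (fun p : V × Fin (n+1) => (p.2 : ℕ)) heq
    by_cases hm1 : v.1 ∈ x (v.2.castPred hvl) <;>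
      by_cases he1 : x (v.2.castPred hvl) ∈ E <;>
      by_cases hm2 : v.1 ∈ x (v.2.pred hv0) <;>
      by_cases he2 : x (v.2.pred hv0) ∈ E
    · exact ⟨hm1, he1, hm2, he2⟩
    all_goals (
      exfalso
      first
        | rw [fstep_of_mem_E v hvl hm1 he1] at hsnd
        | rw [fstep_of_mem_notE v hvl hm1 he1] at hsnd
        | rw [fstep_of_not_mem v hvl hm1] at hsnd
      first
        | rw [pstep_of_mem_E v hv0 hm2 he2] at hsnd
        | rw [pstep_of_mem_notE v hv0 hm2 he2] at hsnd
        | rw [pstep_of_not_mem v hv0 hm2] at hsnd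
      simp only [Fin.val_succ, Fin.coe_castSucc] at hsnd
      omega)
  obtain ⟨hm1, he1, hm2, he2⟩ := key
  have e1 : ff E x hn v = (partner (x (v.2.castPred hvl)) v.1, v.2) := by
    rw [hffv, fstep_of_mem_E v hvl hm1 he1]
  have e2 : gg E x hn v = (partner (x (v.2.pred hv0)) v.1, v.2) := by
    rw [hggv, pstep_of_mem_E v hv0 hm2 he2]
  have hpp : partner (x (v.2.castPred hvl)) v.1 = partner (x (v.2.pred hv0)) v.1 := by
    have := e1 ▸ e2 ▸ heq
    exact congrArg Prod.fst this
  set j := partner (x (v.2.castPred hvl)) v.1 with hj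
  have hjm1 : j ∈ x (v.2.castPred hvl) := (partner_mem hc1 hm1).1
  have hjm2 : j ∈ x (v.2.pred hv0) := hpp ▸ (partner_mem hc2 hm2).1
  have hjne : j ≠ v.1 := (partner_mem hc1 hm1).2
  refine ⟨?_, ?_, ?_⟩
  · rw [e1]
    have hwl : ((j, v.2) : V × Fin (n+1)).2 ≠ Fin.last n := hvl
    rw [ff_eq hn _ hwl, fstep_of_mem_E _ hwl hjm1 he1]
    have : partner (x (v.2.castPred hvl)) j = v.1 :=
      (partner_uniq hc1 hjm1 hm1 (fun hc => hjne hc.symm)).symm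
    rw [this]
  · rw [e1]
    have hw0 : ((j, v.2) : V × Fin (n+1)).2 ≠ 0 := hv0
    rw [gg_eq hn _ hw0, pstep_of_mem_E _ hw0 hjm2 he2]
    have : partner (x (v.2.pred hv0)) j = v.1 :=
      (partner_uniq hc2 hjm2 hm2 (fun hc => hjne hc.symm)).symm
    rw [this]
  · rw [e1]
    push_neg
    exact ⟨hv0, hvl⟩

end Coll

end StrandAux

namespace StrandAux

section Abstract

open SimpleGraph

variable {W : Type*}

theorem abstract_key [Finite W] (G : SimpleGraph W) (f g : W → W)
    (hadj : ∀ v w, G.Adj v w ↔ (w = f v ∨ w = g v))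
    (Bd : Set W)
    (hBd : ∀ v ∈ Bd, f v = g v)
    (hcol : ∀ v, v ∉ Bd → f v = g v →
      f (f v) = v ∧ g (f v) = v ∧ f v ∉ Bd)
    (c : G.ConnectedComponent) :
    Set.ncard {v | v ∈ c.supp ∧ v ∈ Bd} = 0 ∨
      Set.ncard {v | v ∈ c.supp ∧ v ∈ Bd} = 2 := by
  classical
  by_cases hT : {v | v ∈ c.supp ∧ v ∈ Bd} = ∅
  · left; rw [hT]; exact Set.ncard_empty _
  right
  obtain ⟨b, hbsupp, hbBd⟩ : ∃ b, b ∈ c.supp ∧ b ∈ Bd := by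
    obtain ⟨b, hb⟩ := Set.nonempty_iff_ne_empty.2 hT
    exact ⟨b, hb⟩
  have hadjf : ∀ v, G.Adj v (f v) := fun v => (hadj v (f v)).mpr (Or.inl rfl)
  have hadjg : ∀ v, G.Adj v (g v) := fun v => (hadj v (g v)).mpr (Or.inr rfl)
  have hmem : ∀ {v w}, G.Adj v w → w = f v ∨ w = g v := fun h => (hadj _ _).1 h
  set oth : W → W → W := fun v w => if f v = w then g v else f v with hoth
  have hothadj : ∀ v w, G.Adj v (oth v w) := by
    intro v w
    by_cases h : f v = w
    · simpa [oth, h] using hadjg v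
    · simpa [oth, h] using hadjf v
  have hoth_oth : ∀ v w, (w = f v ∨ w = g v) → oth v (oth v w) = w := by
    intro v w hw
    by_cases h : f v = w
    · simp only [oth, if_pos h]
      by_cases h2 : f v = g v
      · rw [if_pos h2, ← h2]; exact h
      · rw [if_neg h2]; exact h
    · have hw' : w = g v := by
        rcases hw with h' | h'
        · exact absurd h'.symm h
        · exact h'
      simp only [oth, if_neg h, if_pos rfl]
      exact hw'.symm
  haveI : Finite G.Dart := Finite.of_injective _ Dart.toProd_injective
  haveI : Fintype G.Dart := Fintype.ofFinite _
  set ρfun : G.Dart → G.Dart := fun d => ⟨(d.fst, oth d.fst d.snd), hothadj _ _⟩ with hρfun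
  have hρinv : Function.Involutive ρfun := by
    intro d
    apply Dart.toProd_injective
    show (d.fst, oth d.fst (oth d.fst d.snd)) = d.toProd
    rw [hoth_oth _ _ (hmem d.adj)]
  set ρp : Equiv.Perm G.Dart := hρinv.toPerm _ with hρp
  set τp : Equiv.Perm G.Dart := (Dart.symm_involutive (G := G)).toPerm _ with hτp
  have hρapp : ∀ d, ρp d = ρfun d := fun _ => rfl
  have hτapp : ∀ d, τp d = d.symm := fun _ => rfl
  set σ : Equiv.Perm G.Dart := τp * ρp with hσ
  have hσapp : ∀ d, σ d = (ρfun d).symm := fun _ => rfl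
  have h2ρ : ρp * ρp = 1 := by
    apply Equiv.ext; intro d
    simp only [Equiv.Perm.mul_apply, hρapp, Equiv.Perm.one_apply]
    exact hρinv d
  have h2τ : τp * τp = 1 := by
    apply Equiv.ext; intro d
    simp only [Equiv.Perm.mul_apply, hτapp, Equiv.Perm.one_apply]
    exact Dart.symm_symm d
  have hρI : ρp⁻¹ = ρp := inv_eq_of_mul_eq_one_right h2ρ
  have hτI : τp⁻¹ = τp := inv_eq_of_mul_eq_one_right h2τ
  have hσinv : σ⁻¹ = ρp * τp := by rw [hσ, mul_inv_rev, hρI, hτI]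
  have hconjρ : ∀ k : ℤ, ρp * σ ^ k * ρp = σ ^ (-k) := by
    intro k
    have h1 : ρp * σ * ρp⁻¹ = σ⁻¹ := by
      rw [hρI, hσinv, hσ]
      rw [show ρp * (τp * ρp) * ρp = ρp * τp * (ρp * ρp) by group, h2ρ, mul_one]
    calc ρp * σ ^ k * ρp = ρp * σ ^ k * ρp⁻¹ := by rw [hρI]
      _ = (ρp * σ * ρp⁻¹) ^ k := (conj_zpow).symm
      _ = (σ⁻¹) ^ k := by rw [h1]
      _ = σ ^ (-k) := by rw [inv_zpow, zpow_neg]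
  have hconjτ : ∀ k : ℤ, τp * σ ^ k * τp = σ ^ (-k) := by
    intro k
    have h1 : τp * σ * τp⁻¹ = σ⁻¹ := by
      rw [hτI, hσinv, hσ]
      rw [show τp * (τp * ρp) * τp = (τp * τp) * (ρp * τp) by group, h2τ, one_mul]
    calc τp * σ ^ k * τp = τp * σ ^ k * τp⁻¹ := by rw [hτI]
      _ = (τp * σ * τp⁻¹) ^ k := (conj_zpow).symm
      _ = (σ⁻¹) ^ k := by rw [h1]
      _ = σ ^ (-k) := by rw [inv_zpow, zpow_neg]
  set d₀ : G.Dart := ⟨(b, f b), hadjf b⟩ with hd₀def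
  have hρd₀ : ρp d₀ = d₀ := by
    apply Dart.toProd_injective
    show (b, oth b (f b)) = (b, f b)
    have : oth b (f b) = f b := by
      simp only [oth, if_pos rfl]
      exact (hBd b hbBd).symm
    rw [this]
  have ρσ : ∀ k : ℤ, ρp ((σ ^ k) d₀) = (σ ^ (-k)) d₀ := by
    intro k
    have : ρp ((σ ^ k) d₀) = (ρp * σ ^ k * ρp) d₀ := by
      simp only [Equiv.Perm.mul_apply, hρd₀]
    rw [this, hconjρ]
  have τσ : ∀ k : ℤ, τp ((σ ^ k) d₀) = (σ ^ (1 - k)) d₀ := by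
    intro k
    have hτd₀ : τp d₀ = σ d₀ := by
      have : σ d₀ = τp (ρp d₀) := rfl
      rw [this, hρd₀]
    have hττ : τp (τp d₀) = d₀ := by
      rw [hτapp, hτapp]; exact Dart.symm_symm d₀
    have h1 : τp ((σ ^ k) d₀) = (τp * σ ^ k * τp) (τp d₀) := by
      simp only [Equiv.Perm.mul_apply, hττ]
    have h2 : (σ ^ (-k)) (σ d₀) = (σ ^ (-k) * σ ^ (1:ℤ)) d₀ := by
      simp [Equiv.Perm.mul_apply]
    rw [h1, hconjτ, hτd₀, h2, ← zpow_add, show -k + 1 = 1 - k by ring]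
  -- periodicity
  set N : ℕ := Function.minimalPeriod σ d₀ with hN
  have hp : d₀ ∈ Function.periodicPts ⇑σ := by
    refine ⟨orderOf σ, orderOf_pos σ, ?_⟩
    show (⇑σ)^[orderOf σ] d₀ = d₀
    rw [Equiv.Perm.iterate_eq_pow, pow_orderOf_eq_one]
    rfl
  have hNpos : 0 < N := Function.minimalPeriod_pos_of_mem_periodicPts hp
  have hNfix0 : (σ ^ N) d₀ = d₀ := by
    have := Function.isPeriodicPt_minimalPeriod ⇑σ d₀
    rwa [Function.IsPeriodicPt, Function.IsFixedPt, Equiv.Perm.iterate_eq_pow] at this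
  have hfixmul : ∀ q : ℤ, (σ ^ ((N : ℤ) * q)) d₀ = d₀ := by
    intro q
    rw [zpow_mul, zpow_natCast]
    exact Equiv.Perm.zpow_apply_eq_self_of_apply_eq_self hNfix0 q
  have Zfix : ∀ m : ℤ, (σ ^ m) d₀ = d₀ ↔ (N : ℤ) ∣ m := by
    intro m
    constructor
    · intro hm
      have hNne : (N : ℤ) ≠ 0 := by exact_mod_cast hNpos.ne'
      have hdm : m = (N : ℤ) * (m / N) + m % N := (Int.mul_ediv_add_emod m N).symm
      have hr0 : 0 ≤ m % N := Int.emod_nonneg m hNne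
      have hrN : m % N < N := Int.emod_lt_of_pos m (by exact_mod_cast hNpos)
      have hsplit : (σ ^ m) d₀ = (σ ^ (m % N)) d₀ := by
        conv_lhs => rw [hdm]
        rw [add_comm, zpow_add, Equiv.Perm.mul_apply, hfixmul]
      rw [hsplit] at hm
      have htn : ((m % N).toNat : ℤ) = m % N := Int.toNat_of_nonneg hr0
      have hm' : (σ ^ ((m % N).toNat : ℕ)) d₀ = d₀ := by
        rw [← zpow_natCast, htn]; exact hm
      by_cases hz : (m % N).toNat = 0
      · have : m % N = 0 := by omega
        exact Int.dvd_of_emod_eq_zero this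
      · exfalso
        have hper : Function.IsPeriodicPt ⇑σ (m % N).toNat d₀ := by
          rw [Function.IsPeriodicPt, Function.IsFixedPt, Equiv.Perm.iterate_eq_pow]
          exact hm'
        have := Function.IsPeriodicPt.minimalPeriod_le (Nat.pos_of_ne_zero hz) hper
        rw [← hN] at this
        omega
    · rintro ⟨q, rfl⟩
      exact hfixmul q
  -- N is even
  have hNeven : ∃ M : ℕ, 0 < M ∧ N = 2 * M := by
    rcases Nat.even_or_odd N with ⟨M, hM⟩ | ⟨j, hj⟩
    · exact ⟨M, by omega, by omega⟩
    · exfalso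
      set k : ℤ := (j : ℤ) + 1 with hk
      have h1 : τp ((σ ^ k) d₀) = (σ ^ (1 - k)) d₀ := τσ k
      have h2 : (σ ^ k) d₀ = (σ ^ (1 - k)) d₀ := by
        have he : k = (1 - k) + (N : ℤ) := by push_cast [hj]; ring
        conv_lhs => rw [he]
        rw [zpow_add, Equiv.Perm.mul_apply, (Zfix ((N : ℤ))).2 (dvd_refl _)]
      rw [← h2] at h1
      exact Dart.symm_ne _ (by rw [← hτapp]; exact h1)
  obtain ⟨M, hMpos, hNM⟩ := hNeven
  set d' : G.Dart := (σ ^ (M : ℤ)) d₀ with hd'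
  set b' : W := d'.fst with hb'
  have hρd' : ρp d' = d' := by
    show ρp ((σ ^ (M : ℤ)) d₀) = (σ ^ (M : ℤ)) d₀
    rw [ρσ]
    conv_rhs => rw [show ((M : ℤ)) = -(M : ℤ) + (N : ℤ) by push_cast [hNM]; ring]
    rw [zpow_add, Equiv.Perm.mul_apply, (Zfix ((N : ℤ))).2 (dvd_refl _)]
  have fixdart : ∀ d : G.Dart, ρp d = d → d.snd = f d.fst ∧ f d.fst = g d.fst := by
    intro d hd
    have h1 : oth d.fst d.snd = d.snd := by
      have := congrArg (fun e : G.Dart => e.toProd.2) hd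
      simpa [hρapp, hρfun] using this
    have h1' : (if f d.fst = d.snd then g d.fst else f d.fst) = d.snd := h1
    by_cases hca : f d.fst = d.snd
    · rw [if_pos hca] at h1'
      exact ⟨hca.symm, hca.trans h1'.symm⟩
    · rw [if_neg hca] at h1'
      exact absurd h1' hca
  -- the orbit
  set Orb : Set G.Dart := Set.range (fun k : ℤ => (σ ^ k) d₀) with hOrb
  have hd₀Orb : d₀ ∈ Orb := ⟨0, by simp⟩
  have hOrbρ : ∀ d ∈ Orb, ρp d ∈ Orb := by
    rintro d ⟨k, rfl⟩
    exact ⟨-k, (ρσ k).symm⟩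
  have hOrbτ : ∀ d ∈ Orb, τp d ∈ Orb := by
    rintro d ⟨k, rfl⟩
    exact ⟨1 - k, (τσ k).symm⟩
  have hstep : ∀ u u', (∀ w (h : G.Adj u w), (⟨(u, w), h⟩ : G.Dart) ∈ Orb) →
      G.Adj u u' → ∀ w (h : G.Adj u' w), (⟨(u', w), h⟩ : G.Dart) ∈ Orb := by
    intro u u' hAll huu' w hw
    have h1 : (⟨(u, u'), huu'⟩ : G.Dart) ∈ Orb := hAll u' huu'
    have h2 : (⟨(u', u), huu'.symm⟩ : G.Dart) ∈ Orb := by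
      have := hOrbτ _ h1
      rwa [hτapp] at this
    have h3 : (⟨(u', oth u' u), hothadj u' u⟩ : G.Dart) ∈ Orb := by
      have := hOrbρ _ h2
      rwa [hρapp] at this
    by_cases hwu : w = u
    · subst hwu
      exact h2
    · have hu : u = f u' ∨ u = g u' := hmem huu'.symm
      have hwm : w = f u' ∨ w = g u' := hmem hw
      have hqo : w = oth u' u := by
        by_cases hf : f u' = u
        · have ho : oth u' u = g u' := by rw [hoth]; simp only [if_pos hf]
          rcases hwm with h' | h'
          · exact absurd (h'.trans hf) hwu
          · rw [ho]; exact h'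
        · have hg' : u = g u' := by
            rcases hu with h' | h'
            · exact absurd h'.symm hf
            · exact h'
          have ho : oth u' u = f u' := by rw [hoth]; simp only [if_neg hf]
          rcases hwm with h' | h'
          · rw [ho]; exact h'
          · exact absurd (h'.trans hg'.symm) hwu
      have : (⟨(u', w), hw⟩ : G.Dart) = ⟨(u', oth u' u), hothadj u' u⟩ :=
        Dart.toProd_injective (by show (u', w) = (u', oth u' u); rw [hqo])
      rw [this]
      exact h3
  have walkAll : ∀ (u v' : W), G.Walk u v' →
      (∀ w (h : G.Adj u w), (⟨(u, w), h⟩ : G.Dart) ∈ Orb) →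
      ∀ w (h : G.Adj v' w), (⟨(v', w), h⟩ : G.Dart) ∈ Orb := by
    intro u v' p
    induction p with
    | nil => exact id
    | cons h p ih => exact fun ha => ih (hstep _ _ ha h)
  have allb : ∀ w (h : G.Adj b w), (⟨(b, w), h⟩ : G.Dart) ∈ Orb := by
    intro w hw
    have hww : w = f b := by
      rcases hmem hw with h' | h'
      · exact h'
      · rw [h', ← hBd b hbBd]
    have : (⟨(b, w), hw⟩ : G.Dart) = d₀ :=
      Dart.toProd_injective (by show (b, w) = (b, f b); rw [hww])
    rw [this]
    exact hd₀Orb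
  have reachAll : ∀ v', G.Reachable b v' →
      ∀ w (h : G.Adj v' w), (⟨(v', w), h⟩ : G.Dart) ∈ Orb := by
    intro v' hr
    obtain ⟨p⟩ := hr
    exact walkAll b v' p allb
  have hsupp_iff : ∀ v', v' ∈ c.supp ↔ G.Reachable v' b := by
    intro v'
    rw [← (ConnectedComponent.mem_supp_iff c b).1 hbsupp,
      ConnectedComponent.mem_supp_iff, ConnectedComponent.eq]
  have hreach : ∀ m : ℕ, G.Reachable b (((σ ^ m) d₀).fst) := by
    intro m
    induction m with
    | zero =>
      simp only [pow_zero, Equiv.Perm.one_apply]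
      exact Reachable.refl b
    | succ m ih =>
      have hs : (σ ^ (m + 1)) d₀ = σ ((σ ^ m) d₀) := by
        rw [pow_succ', Equiv.Perm.mul_apply]
      rw [hs]
      refine ih.trans (Adj.reachable ?_)
      exact (hothadj ((σ ^ m) d₀).fst ((σ ^ m) d₀).snd :
        G.Adj ((σ ^ m) d₀).fst (σ ((σ ^ m) d₀)).fst)
  have hd'nat : d' = (σ ^ M) d₀ := by rw [hd', zpow_natCast]
  have hb'supp : b' ∈ c.supp := by
    rw [hsupp_iff]
    apply Reachable.symm
    show G.Reachable b d'.fst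
    rw [hd'nat]
    exact hreach M
  have hsnd' : d'.snd = f b' := (fixdart d' hρd').1
  have hb'Bd : b' ∈ Bd := by
    by_contra hnb
    have hfix := fixdart d' hρd'
    obtain ⟨h1, h2, h3⟩ := hcol b' hnb hfix.2
    have hconf : ∀ (u z : W), G.Walk u z → u ∈ ({b', f b'} : Set W) →
        z ∈ ({b', f b'} : Set W) := by
      intro u z p
      induction p with
      | nil => exact id
      | @cons u₁ u₂ z₁ hadj' p ih =>
        intro hu
        apply ih
        rcases hu with hu | hu
        · subst hu
          rcases hmem hadj' with h' | h'
          · right; rw [h']; rfl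
          · right; rw [h', ← hfix.2]; rfl
        · rw [Set.mem_singleton_iff] at hu
          subst hu
          rcases hmem hadj' with h' | h'
          · left; rw [h', h1]
          · left; rw [h', h2]
    have hreachb' : G.Reachable b' b := (hsupp_iff b').1 hb'supp
    obtain ⟨p⟩ := hreachb'
    have hbmem := hconf b' b p (by left; rfl)
    rcases hbmem with hb1 | hb2
    · rw [← hb1] at hnb
      exact hnb hbBd
    · rw [Set.mem_singleton_iff] at hb2
      rw [← hb2] at h3
      exact h3 hbBd
  have hbb' : b ≠ b' := by
    intro hbe
    have hdd : d' = d₀ := by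
      apply Dart.toProd_injective
      show (d'.fst, d'.snd) = (b, f b)
      rw [hsnd', ← hb', ← hbe]
    have : (N : ℤ) ∣ (M : ℤ) := (Zfix _).1 hdd
    have hle := Int.le_of_dvd (by exact_mod_cast hMpos) this
    have : (N : ℤ) ≤ (M : ℤ) := hle
    have : N ≤ M := by exact_mod_cast this
    omega
  have hset : {v | v ∈ c.supp ∧ v ∈ Bd} = {b, b'} := by
    ext v
    simp only [Set.mem_setOf_eq, Set.mem_insert_iff, Set.mem_singleton_iff]
    constructor
    · rintro ⟨hvs, hvBd⟩
      have hfg := hBd v hvBd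
      have hrv : G.Reachable b v := ((hsupp_iff v).1 hvs).symm
      obtain ⟨k, hk0⟩ := reachAll v hrv (f v) (hadjf v)
      have hk : (σ ^ k) d₀ = (⟨(v, f v), hadjf v⟩ : G.Dart) := hk0
      have hρdv : ρp (⟨(v, f v), hadjf v⟩ : G.Dart) = ⟨(v, f v), hadjf v⟩ := by
        apply Dart.toProd_injective
        show (v, oth v (f v)) = (v, f v)
        have : oth v (f v) = f v := by
          rw [hoth]; simp only [if_pos rfl]; exact hfg.symm
        rw [this]
      have e1 : (σ ^ (-k)) d₀ = (σ ^ k) d₀ := by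
        rw [← ρσ k, hk, hρdv]
      have e2 : (σ ^ (k + k)) d₀ = d₀ := by
        calc (σ ^ (k + k)) d₀ = (σ ^ k) ((σ ^ k) d₀) := by
              rw [zpow_add, Equiv.Perm.mul_apply]
          _ = (σ ^ k) ((σ ^ (-k)) d₀) := by rw [e1]
          _ = (σ ^ (k + -k)) d₀ := by rw [zpow_add, Equiv.Perm.mul_apply]
          _ = d₀ := by simp
      obtain ⟨q, hq⟩ := (Zfix _).1 e2
      have hq2 : k + k = 2 * ((M : ℤ) * q) := by
        rw [hq]; push_cast [hNM]; ring
      have hk2 : k = (M : ℤ) * q := by omega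
      rcases Int.even_or_odd q with ⟨a, ha⟩ | ⟨a, ha⟩
      · left
        have hkN : (σ ^ k) d₀ = d₀ := by
          refine (Zfix _).2 ⟨a, ?_⟩
          rw [hk2, ha]; push_cast [hNM]; ring
        have := hkN.symm.trans hk
        exact (congrArg (fun d : G.Dart => d.fst) this).symm
      · right
        have hkd' : (σ ^ k) d₀ = d' := by
          rw [show k = (M : ℤ) + (N : ℤ) * a by rw [hk2, ha]; push_cast [hNM]; ring,
            zpow_add, Equiv.Perm.mul_apply, (Zfix ((N : ℤ) * a)).2 ⟨a, rfl⟩]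
        have := hkd'.symm.trans hk
        exact (congrArg (fun d : G.Dart => d.fst) this).symm
    · rintro (rfl | rfl)
      · exact ⟨hbsupp, hbBd⟩
      · exact ⟨hb'supp, hb'Bd⟩
  rw [hset]
  exact Set.ncard_pair hbb'


end Abstract

end StrandAux

/-- For a configuration of antiferromagnetic (bridge) and
ferromagnetic (crossing) operators, every connected component of the strand graph
contains exactly `0` or exactly `2` boundary vertices: components are closed loops or
open strands with two boundary endpoints. -/
theorem zero_or_two_boundary [Fintype V] [DecidableEq V]
    (E EF : Finset (Finset V))
    (hE : ∀ e ∈ E, e.card = 2) (hEF : ∀ e ∈ EF, e.card = 2)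
    (hdisj : Disjoint E EF)
    (B : ℕ) (hB : 0 < B)
    (x : Fin (2 * B) → Finset V) (hx : ∀ t, x t ∈ E ∪ EF)
    (c : (strandGraph E EF (2 * B) x).ConnectedComponent) :
    Set.ncard {v : V × Fin (2 * B + 1) |
        v ∈ c.supp ∧ (v.2 = 0 ∨ v.2 = Fin.last (2 * B))} = 0 ∨
    Set.ncard {v : V × Fin (2 * B + 1) |
        v ∈ c.supp ∧ (v.2 = 0 ∨ v.2 = Fin.last (2 * B))} = 2 := by
  classical
  have hn : 2 * B ≠ 0 := by omega
  have hiff : ∀ v w, (strandGraph E EF (2 * B) x).Adj v w ↔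
      (w = StrandAux.ff E x hn v ∨ w = StrandAux.gg E x hn v) := by
    intro v w
    constructor
    · exact StrandAux.adj_char hE hEF hdisj hx hn
    · rintro (rfl | rfl)
      · by_cases h : v.2 = Fin.last (2 * B)
        · rw [StrandAux.ff_eq' hn v h]
          exact StrandAux.adj_pstep hE hEF hdisj hx v _
        · rw [StrandAux.ff_eq hn v h]
          exact StrandAux.adj_fstep hE hEF hdisj hx v h
      · by_cases h : v.2 = 0
        · rw [StrandAux.gg_eq' hn v h]
          exact StrandAux.adj_fstep hE hEF hdisj hx v _
        · rw [StrandAux.gg_eq hn v h]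
          exact StrandAux.adj_pstep hE hEF hdisj hx v h
  have habs := StrandAux.abstract_key (strandGraph E EF (2 * B) x)
    (StrandAux.ff E x hn) (StrandAux.gg E x hn) hiff
    {v : V × Fin (2 * B + 1) | v.2 = 0 ∨ v.2 = Fin.last (2 * B)}
    (fun v hv => StrandAux.boundary_ff_eq_gg hn v hv)
    (fun v hv hfg => by
      have h0 : v.2 ≠ 0 := fun h => hv (Or.inl h)
      have hl : v.2 ≠ Fin.last (2 * B) := fun h => hv (Or.inr h)
      exact StrandAux.collapse hE hEF hx hn v h0 hl hfg)
    c
  exact habs
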